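/- Let λ1, λ2, λ3, λ4 be distinct positive reals and let X1 = λ1·R1 + λ2·R2 + λ3·R3 + λ4·R4, X2 = λ1·R1 + λ2·R2' + λ3·R3' + λ4·R4' with all R's independent standard exponentials and only R1 shared. If λ1 < max{λ2, λ3, λ4}, then lim_{y→∞} P(X2 > y | X1 > y) = 0. -/

import Mathlib

open MeasureTheory ProbabilityTheory Filter

/-- `R` is a standard exponential random variable under `μ`:
its survival function is `exp (-y)` for `y ≥ 0` and `1` for `y < 0`. -/
def IsStdExp {Ω : Type*} [MeasurableSpace Ω] (μ : Measure Ω) (R : Ω → ℝ) : Prop :=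
  Measurable R ∧ ∀ y : ℝ, μ {ω | y < R ω} = ENNReal.ofReal (Real.exp (-(max y 0)))

/-!
With `m = max λ2 λ3 λ4`, the tail of `X1` is at least that of its dominant term, `exp (-y / m)`.
The joint exceedance `{X1 > y, X2 > y}` lies in `{X1 + X2 ≥ 2y}`, and `X1 + X2` is a sum of
independent exponentials with coefficients `2λ1, λ2, λ3, λ4, λ2, λ3, λ4`, all below `2m` since
`λ1 < m`. So `X1 + X2` has a finite exponential moment at some `t > 1 / (2m)`, and Chernoff's bound
`O(exp (-2ty))` for the joint tail decays faster than `exp (-y / m)`.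
-/

open Set Real Topology

namespace IsStdExp

variable {Ω : Type*} [MeasurableSpace Ω] {μ : Measure Ω} {R : Ω → ℝ}

lemma ae_nonneg [IsProbabilityMeasure μ] (hR : IsStdExp μ R) : ∀ᵐ ω ∂μ, 0 ≤ R ω := by
  have hgt : ∀ n : ℕ, ∀ᵐ ω ∂μ, -(1 / ((n : ℝ) + 1)) < R ω := fun n => by
    have hneg : -(1 / ((n : ℝ) + 1)) < 0 := neg_neg_of_pos (by positivity)
    refine mem_ae_iff.mpr
      ((prob_compl_eq_zero_iff (measurableSet_lt measurable_const hR.1)).mpr ?_)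
    rw [hR.2, max_eq_right hneg.le]
    simp
  filter_upwards [ae_all_iff.mpr hgt] with ω hω
  refine le_of_forall_pos_lt_add fun ε hε => ?_
  obtain ⟨n, hn⟩ := exists_nat_one_div_lt hε
  linarith [hω n]

lemma measure_lt_exp_mul (hR : IsStdExp μ R) {s t : ℝ} (hs : 0 < s) (ht : 1 ≤ t) :
    μ {ω | t < exp (s * R ω)} = ENNReal.ofReal (t ^ (-(1 / s))) := by
  have ht0 : 0 < t := by linarith
  have hset : {ω | t < exp (s * R ω)} = {ω | log t / s < R ω} := by
    ext ω
    exact (log_lt_iff_lt_exp ht0).symm.trans (div_lt_iff₀' hs).symm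
  rw [hset, hR.2, max_eq_left (div_nonneg (log_nonneg ht) hs.le), rpow_def_of_pos ht0]
  congr 2
  ring

lemma integrable_exp_mul [IsProbabilityMeasure μ] (hR : IsStdExp μ R) {s : ℝ} (hs : s < 1) :
    Integrable (fun ω => exp (s * R ω)) μ := by
  have hmeas : AEStronglyMeasurable (fun ω => exp (s * R ω)) μ :=
    (hR.1.const_mul s).exp.aestronglyMeasurable
  rcases le_or_gt s 0 with hs0 | hs0
  · refine Integrable.of_bound hmeas 1 ?_
    filter_upwards [hR.ae_nonneg] with ω hω
    rw [norm_of_nonneg (exp_pos _).le, exp_le_one_iff]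
    exact mul_nonpos_of_nonpos_of_nonneg hs0 hω
  refine ⟨hmeas, ?_⟩
  rw [hasFiniteIntegral_iff_ofReal (.of_forall fun ω => (exp_pos _).le),
    lintegral_eq_lintegral_meas_lt μ (.of_forall fun ω => (exp_pos _).le) hmeas.aemeasurable,
    ← Ioc_union_Ioi_eq_Ioi zero_le_one, lintegral_union measurableSet_Ioi Ioc_disjoint_Ioi_same]
  refine ENNReal.add_lt_top.mpr ⟨?_, ?_⟩
  · calc ∫⁻ t in Ioc (0 : ℝ) 1, μ {ω | t < exp (s * R ω)}
        ≤ ∫⁻ _ in Ioc (0 : ℝ) 1, 1 := lintegral_mono fun t => prob_le_one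
      _ < ⊤ := by simp
  · have hint : IntegrableOn (fun t : ℝ => t ^ (-(1 / s))) (Ioi 1) := by
      refine integrableOn_Ioi_rpow_of_lt ?_ zero_lt_one
      rw [neg_lt_neg_iff, lt_div_iff₀ hs0]
      linarith
    rw [setLIntegral_congr_fun measurableSet_Ioi fun t ht =>
      hR.measure_lt_exp_mul hs0 (le_of_lt ht)]
    exact hint.lintegral_lt_top

lemma exp_neg_div_le_measureReal_lt [IsFiniteMeasure μ] {X : Ω → ℝ} (hR : IsStdExp μ R)
    {c y : ℝ} (hc : 0 < c) (hy : 0 ≤ y) (hX : ∀ᵐ ω ∂μ, c * R ω ≤ X ω) :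
    exp (-(y / c)) ≤ μ.real {ω | y < X ω} := by
  have hsub : {ω | y / c < R ω} ≤ᵐ[μ] {ω | y < X ω} := by
    filter_upwards [hX] with ω hω hlt
    have : y < c * R ω := (div_lt_iff₀' hc).mp hlt
    exact this.trans_le hω
  calc exp (-(y / c)) = μ.real {ω | y / c < R ω} := by
        rw [measureReal_def, hR.2, max_eq_left (div_nonneg hy hc.le),
          ENNReal.toReal_ofReal (exp_pos _).le]
    _ ≤ μ.real {ω | y < X ω} := ENNReal.toReal_mono (measure_ne_top _ _) (measure_mono_ae hsub)

end IsStdExp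

lemma integrable_exp_mul_sum_of_isStdExp {Ω ι : Type*} [MeasurableSpace Ω] {μ : Measure Ω}
    [IsProbabilityMeasure μ] [Fintype ι] {R : ι → Ω → ℝ} (hR : ∀ i, IsStdExp μ (R i))
    (hind : iIndepFun R μ) {c : ι → ℝ} {t : ℝ} (hc : ∀ i, t * c i < 1) :
    Integrable (fun ω => exp (t * ∑ i, c i * R i ω)) μ := by
  have hind' : iIndepFun (fun i ω => c i * R i ω) μ :=
    hind.comp (fun i x => c i * x) fun i => measurable_const_mul _
  simpa only [Finset.sum_apply] using hind'.integrable_exp_mul_sum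
    (fun i => (hR i).1.const_mul _) (s := Finset.univ) fun i _ => by
      simpa only [← mul_assoc] using (hR i).integrable_exp_mul (hc i)

lemma ae_mul_le_sum_of_isStdExp {Ω ι : Type*} [MeasurableSpace Ω] {μ : Measure Ω}
    [IsProbabilityMeasure μ] [Fintype ι] {R : ι → Ω → ℝ} (hR : ∀ i, IsStdExp μ (R i))
    {c : ι → ℝ} (hc : ∀ i, 0 ≤ c i) (j : ι) : ∀ᵐ ω ∂μ, c j * R j ω ≤ ∑ i, c i * R i ω := by
  filter_upwards [ae_all_iff.mpr fun i => (hR i).ae_nonneg] with ω hω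
  exact Finset.single_le_sum (fun i _ => mul_nonneg (hc i) (hω i)) (Finset.mem_univ j)

lemma measureReal_lt_and_lt_le_mgf_mul_exp {Ω : Type*} [MeasurableSpace Ω] {μ : Measure Ω}
    [IsFiniteMeasure μ] {X Y : Ω → ℝ} {t : ℝ} (ht : 0 ≤ t)
    (hint : Integrable (fun ω => exp (t * (X ω + Y ω))) μ) (y : ℝ) :
    μ.real {ω | y < X ω ∧ y < Y ω} ≤ mgf (fun ω => X ω + Y ω) μ t * exp (-(2 * t * y)) :=
  calc μ.real {ω | y < X ω ∧ y < Y ω} ≤ μ.real {ω | 2 * y ≤ X ω + Y ω} :=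
        measureReal_mono fun ω ⟨hX, hY⟩ => show 2 * y ≤ X ω + Y ω by linarith
    _ ≤ exp (-t * (2 * y)) * mgf (fun ω => X ω + Y ω) μ t :=
        measure_ge_le_exp_mul_mgf _ ht hint
    _ = mgf (fun ω => X ω + Y ω) μ t * exp (-(2 * t * y)) := by rw [mul_comm]; ring_nf

lemma tendsto_div_atTop_nhds_zero_of_exp_bounds {f g : ℝ → ℝ} {C a b : ℝ} (hab : b < a)
    (hf0 : ∀ y, 0 ≤ f y) (hf : ∀ y, f y ≤ C * exp (-(a * y)))
    (hg : ∀ᶠ y in atTop, exp (-(b * y)) ≤ g y) :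
    Tendsto (fun y => f y / g y) atTop (𝓝 0) := by
  have hlim : Tendsto (fun y => C * exp ((b - a) * y)) atTop (𝓝 0) := by
    simpa using
      (tendsto_exp_atBot.comp (tendsto_id.const_mul_atTop_of_neg (sub_neg.mpr hab))).const_mul C
  refine squeeze_zero' ?_ ?_ hlim
  · filter_upwards [hg] with y hy
    exact div_nonneg (hf0 y) ((exp_pos _).le.trans hy)
  · filter_upwards [hg] with y hy
    calc f y / g y ≤ C * exp (-(a * y)) / exp (-(b * y)) :=
          div_le_div₀ ((hf0 y).trans (hf y)) (hf y) (exp_pos _) hy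
      _ = C * exp ((b - a) * y) := by
          rw [mul_div_assoc, ← exp_sub]
          ring_nf

theorem stmt_9_general {Ω : Type*} [MeasurableSpace Ω] (μ : Measure Ω) [IsProbabilityMeasure μ]
    (R : Fin 7 → Ω → ℝ) (hR : ∀ i, IsStdExp μ (R i))
    (hind : iIndepFun R μ)
    (l1 l2 l3 l4 : ℝ) (hpos : 0 < l1 ∧ 0 < l2 ∧ 0 < l3 ∧ 0 < l4)
    (X1 X2 : Ω → ℝ)
    (hX1 : ∀ ω, X1 ω = l1 * R 0 ω + l2 * R 1 ω + l3 * R 2 ω + l4 * R 3 ω)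
    (hX2 : ∀ ω, X2 ω = l1 * R 0 ω + l2 * R 4 ω + l3 * R 5 ω + l4 * R 6 ω)
    (hdom : l1 < max (max l2 l3) l4) :
    Tendsto (fun y : ℝ =>
        (μ {ω | y < X1 ω ∧ y < X2 ω}).toReal / (μ {ω | y < X1 ω}).toReal)
      atTop (nhds 0) := by
  obtain ⟨h1, h2, h3, h4⟩ := hpos
  set m := max (max l2 l3) l4 with hm_def
  have hl : l2 ≤ m ∧ l3 ≤ m ∧ l4 ≤ m := by simp [hm_def]
  have hm : 0 < m := h2.trans_le hl.1
  set c₁ : Fin 7 → ℝ := ![l1, l2, l3, l4, 0, 0, 0]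
  set c₁₂ : Fin 7 → ℝ := ![2 * l1, l2, l3, l4, l2, l3, l4]
  obtain ⟨j, hj⟩ : ∃ j, c₁ j = m := by
    rcases max_choice (max l2 l3) l4 with h | h
    · rcases max_choice l2 l3 with h' | h'
      exacts [⟨1, by rw [hm_def, h, h']; rfl⟩, ⟨2, by rw [hm_def, h, h']; rfl⟩]
    · exact ⟨3, by rw [hm_def, h]; rfl⟩
  have hX1_ge : ∀ᵐ ω ∂μ, m * R j ω ≤ X1 ω := by
    rw [← hj]
    have hc₁ : ∀ i, 0 ≤ c₁ i := fun i => by fin_cases i <;> simp [c₁] <;> positivity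
    convert ae_mul_le_sum_of_isStdExp hR hc₁ j using 3 with ω
    simp [c₁, Fin.sum_univ_seven, hX1]
  obtain ⟨t, ht_lo, ht_hi⟩ : ∃ t, 1 / (2 * m) < t ∧ t < 1 / max (2 * l1) m :=
    exists_between (one_div_lt_one_div_of_lt (by positivity) (max_lt (by linarith) (by linarith)))
  have ht0 : 0 < t := lt_trans (by positivity) ht_lo
  have hcoef : ∀ i, t * c₁₂ i < 1 := by
    have ht_max : t * max (2 * l1) m < 1 := (lt_div_iff₀ (by positivity)).mp ht_hi
    intro i
    fin_cases i <;> simp [c₁₂] <;> nlinarith [le_max_left (2 * l1) m, le_max_right (2 * l1) m]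
  have hint : Integrable (fun ω => exp (t * (X1 ω + X2 ω))) μ := by
    convert integrable_exp_mul_sum_of_isStdExp hR hind hcoef using 4 with ω
    simp [c₁₂, Fin.sum_univ_seven, hX1, hX2]
    ring
  refine tendsto_div_atTop_nhds_zero_of_exp_bounds (b := 1 / m)
    (by linarith [show 1 / (2 * m) = 1 / m / 2 by ring]) (fun y => measureReal_nonneg)
    (measureReal_lt_and_lt_le_mgf_mul_exp ht0.le hint) ?_
  filter_upwards [eventually_ge_atTop 0] with y hy
  rw [one_div_mul_eq_div]
  exact (hR j).exp_neg_div_le_measureReal_lt hm hy hX1_ge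

/-- X1, X2 share only R1 (index 0). If λ1 is not dominant, the pair is
asymptotically independent. -/
theorem stmt_9 {Ω : Type*} [MeasurableSpace Ω] (μ : Measure Ω) [IsProbabilityMeasure μ]
    (R : Fin 7 → Ω → ℝ) (hR : ∀ i, IsStdExp μ (R i))
    (hind : iIndepFun R μ)
    (l1 l2 l3 l4 : ℝ) (hpos : 0 < l1 ∧ 0 < l2 ∧ 0 < l3 ∧ 0 < l4)
    (hdist : l1 ≠ l2 ∧ l1 ≠ l3 ∧ l1 ≠ l4 ∧ l2 ≠ l3 ∧ l2 ≠ l4 ∧ l3 ≠ l4)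
    (X1 X2 : Ω → ℝ)
    (hX1 : ∀ ω, X1 ω = l1 * R 0 ω + l2 * R 1 ω + l3 * R 2 ω + l4 * R 3 ω)
    (hX2 : ∀ ω, X2 ω = l1 * R 0 ω + l2 * R 4 ω + l3 * R 5 ω + l4 * R 6 ω)
    (hdom : l1 < max (max l2 l3) l4) :
    Tendsto (fun y : ℝ =>
        (μ {ω | y < X1 ω ∧ y < X2 ω}).toReal / (μ {ω | y < X1 ω}).toReal)
      atTop (nhds 0) :=
  stmt_9_general μ R hR hind l1 l2 l3 l4 hpos X1 X2 hX1 hX2 hdom
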